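/- arXiv:1608.06782 — 2 statements merged into one kernel-verified Lean document; each statement's English description precedes it below -/
import Mathlib

section
/- For each fixed x > 0, 1 − W(−x, −α/2, 1) tends to erf(x/2) as α → 1⁻. -/
open Real Filter Set

/-- The Wright function `W(x,a,b)`, with the convention that `1/Gamma` vanishes at
the nonpositive integers (in Mathlib, `Real.Gamma` is `0` there, and division by
`0` is `0`). -/
noncomputable def wright (x a b : ℝ) : ℝ :=
  ∑' k : ℕ, x ^ k / (Nat.factorial k * Real.Gamma (a * k + b))

/-- The Mainardi function `M_ν(x) = W(−x, −ν, 1−ν)`. -/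
noncomputable def mainardi (ν x : ℝ) : ℝ := wright (-x) (-ν) (1 - ν)

/-- The error function `erf(x) = (2/√π) ∫₀ˣ exp(−s²) ds`. -/
noncomputable def erf (x : ℝ) : ℝ :=
  2 / Real.sqrt Real.pi * ∫ s in (0:ℝ)..x, Real.exp (-s ^ 2)

/-!
At `a = -1/2` the even-indexed terms of the Wright series vanish, except the first, because
`1/Γ` vanishes at the nonpositive integers; by the reflection formula the odd-indexed ones are
the Taylor coefficients of `-erf (x/2)`. Hence `W(-x, -1/2, 1) = 1 - erf (x/2)`. The function
`a ↦ W(x, a, 1)` is right-continuous at `-1/2` by dominated convergence: for `a ∈ [-1/2, -1/4]`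
the reflection formula and the log-convexity of `Γ` give `|1/Γ(ak + 1)| ≤ C √k!`, and
`∑ |x|^k / √k!` converges.
-/

open scoped Topology Nat

lemma Nat.factorial_two_mul (n : ℕ) : (2 * n)! = 2 ^ n * n ! * (2 * n - 1)‼ := by
  cases n with
  | zero => rfl
  | succ m =>
    rw [show 2 * (m + 1) - 1 = 2 * m + 1 by omega, show 2 * (m + 1) = 2 * m + 1 + 1 by ring,
      Nat.factorial_eq_mul_doubleFactorial, show 2 * m + 1 + 1 = 2 * (m + 1) by ring,
      Nat.doubleFactorial_two_mul]

namespace Real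

lemma continuous_inv_Gamma : Continuous fun s : ℝ => (Gamma s)⁻¹ := by
  have h : (fun s : ℝ => (Gamma s)⁻¹) = fun s : ℝ => ((Complex.Gamma s)⁻¹).re := by
    ext s
    rw [Complex.Gamma_ofReal, ← Complex.ofReal_inv, Complex.ofReal_re]
  rw [h]
  exact Complex.continuous_re.comp
    (Complex.differentiable_one_div_Gamma.continuous.comp Complex.continuous_ofReal)

lemma inv_Gamma_one_sub {t : ℝ} (ht : Gamma t ≠ 0) :
    (Gamma (1 - t))⁻¹ = Gamma t * sin (π * t) / π := by
  have h := Gamma_mul_Gamma_one_sub t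
  rcases eq_or_ne (sin (π * t)) 0 with hs | hs
  · rw [hs, div_zero, mul_eq_zero, or_iff_right ht] at h
    simp [h, hs]
  · rw [eq_div_iff hs] at h
    refine inv_eq_of_mul_eq_one_left ?_
    rw [div_mul_eq_mul_div, div_eq_one_iff_eq pi_ne_zero]
    linear_combination h

lemma abs_inv_Gamma_one_sub_le {t : ℝ} (ht : 0 < t) :
    |(Gamma (1 - t))⁻¹| ≤ Gamma t / π := by
  have hΓ := Gamma_pos_of_pos ht
  rw [inv_Gamma_one_sub hΓ.ne', abs_div, abs_mul, abs_of_pos hΓ, abs_of_pos pi_pos]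
  gcongr
  exact mul_le_of_le_one_right hΓ.le (abs_sin_le_one _)

lemma inv_Gamma_half_sub_nat (n : ℕ) :
    (Gamma (1 / 2 - n))⁻¹ = (-1) ^ n * (2 * n)! / (4 ^ n * n ! * √π) := by
  have hΓ : Gamma (n + 1 / 2) ≠ 0 := (Gamma_pos_of_pos (by positivity)).ne'
  have h_sin : sin (π * (n + 1 / 2)) = (-1) ^ n := by
    rw [mul_add, mul_comm π, mul_one_div, sin_add_pi_div_two, cos_nat_mul_pi]
  have h4 : (4 : ℝ) ^ n = 2 ^ n * 2 ^ n := by rw [← mul_pow]; norm_num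
  rw [show (1 : ℝ) / 2 - n = 1 - (n + 1 / 2) by ring, inv_Gamma_one_sub hΓ, h_sin,
    Gamma_nat_add_half, Nat.factorial_two_mul, h4]
  push_cast
  field_simp
  rw [sq_sqrt pi_pos.le]

lemma Gamma_nat_div_two_add_one_le_sqrt_factorial (k : ℕ) :
    Gamma (k / 2 + 1) ≤ √(k ! : ℝ) := by
  have h := Gamma_mul_add_mul_le_rpow_Gamma_mul_rpow_Gamma (s := 1) (t := k + 1)
    one_pos (by positivity) (by norm_num : (0 : ℝ) < 1 / 2) (by norm_num : (0 : ℝ) < 1 / 2)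
    (by norm_num)
  rw [Gamma_one, one_rpow, one_mul, Gamma_nat_eq_factorial, ← sqrt_eq_rpow] at h
  convert h using 2
  ring

lemma Gamma_le_max_mul_sqrt_factorial {k : ℕ} {t : ℝ}
    (ht : t ∈ Icc (1 / 4) ((k : ℝ) / 2 + 1)) :
    Gamma t ≤ max 1 (Gamma (1 / 4)) * √(k ! : ℝ) := by
  have h_sqrt : 1 ≤ √(k ! : ℝ) := one_le_sqrt.mpr (mod_cast k.factorial_pos)
  calc Gamma t ≤ max (Gamma (1 / 4)) (Gamma (k / 2 + 1)) :=
        convexOn_Gamma.le_max_of_mem_Icc (by norm_num) (mem_Ioi.mpr (by positivity)) ht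
    _ ≤ max (Gamma (1 / 4)) √(k ! : ℝ) :=
        max_le_max le_rfl (Gamma_nat_div_two_add_one_le_sqrt_factorial k)
    _ ≤ max 1 (Gamma (1 / 4)) * √(k ! : ℝ) := by
        refine max_le ?_ ?_
        · exact (le_max_right _ _).trans
            (le_mul_of_one_le_right (zero_le_one.trans (le_max_left _ _)) h_sqrt)
        · exact le_mul_of_one_le_left (sqrt_nonneg _) (le_max_left _ _)

lemma abs_inv_Gamma_mul_nat_add_one_le {a : ℝ} (ha : a ∈ Icc (-(1 / 2)) (-(1 / 4))) (k : ℕ) :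
    |(Gamma (a * k + 1))⁻¹| ≤ max 1 (Gamma (1 / 4)) * √(k ! : ℝ) := by
  rcases k.eq_zero_or_pos with rfl | hk
  · simp
  have hk : (1 : ℝ) ≤ k := mod_cast hk
  have ht : -a * k ∈ Icc (1 / 4) ((k : ℝ) / 2 + 1) :=
    ⟨by nlinarith [ha.2], by nlinarith [ha.1]⟩
  have ht₀ : 0 < -a * k := by linarith [ht.1]
  calc |(Gamma (a * k + 1))⁻¹| = |(Gamma (1 - -a * k))⁻¹| := by ring_nf
    _ ≤ Gamma (-a * k) / π := abs_inv_Gamma_one_sub_le ht₀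
    _ ≤ Gamma (-a * k) := div_le_self (Gamma_pos_of_pos ht₀).le (by linarith [pi_gt_three])
    _ ≤ _ := Gamma_le_max_mul_sqrt_factorial ht

end Real

lemma summable_abs_pow_div_sqrt_factorial (x : ℝ) :
    Summable fun k : ℕ => |x| ^ k / √(k ! : ℝ) := by
  -- AM-GM: `|x|^k/√k! = (1/2)^k · (2^k |x|^k/√k!) ≤ (1/4)^k + (4x²)^k/k!`
  refine Summable.of_nonneg_of_le (fun k => by positivity) (fun k => ?_)
    ((summable_geometric_of_lt_one (by norm_num) (by norm_num : (1 / 4 : ℝ) < 1)).add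
      (summable_pow_div_factorial (4 * x ^ 2)))
  set v := |x| ^ k / √(k ! : ℝ)
  have hv : v ^ 2 = (x ^ 2) ^ k / k ! := by
    rw [div_pow, sq_sqrt (by positivity), ← pow_mul, mul_comm, pow_mul, sq_abs]
  have hu : (1 / 2 : ℝ) ^ k * 2 ^ k = 1 := by rw [← mul_pow]; norm_num
  have h_amgm := two_mul_le_add_sq ((1 / 2 : ℝ) ^ k) (2 ^ k * v)
  have h_left : (1 / 4 : ℝ) ^ k = ((1 / 2) ^ k) ^ 2 := by
    rw [← pow_mul, mul_comm, pow_mul]; norm_num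
  have h_right : (4 * x ^ 2) ^ k / k ! = (2 ^ k * v) ^ 2 := by
    have h2 : ((2 : ℝ) ^ k) ^ 2 = 4 ^ k := by rw [← pow_mul, mul_comm, pow_mul]; norm_num
    rw [mul_pow (2 ^ k : ℝ) v 2, hv, h2, mul_pow]
    ring
  rw [h_left, h_right]
  nlinarith [sq_nonneg v]

lemma hasSum_erf (t : ℝ) :
    HasSum (fun n : ℕ => 2 / √π * ((-1) ^ n * t ^ (2 * n + 1) / (n ! * (2 * n + 1))))
      (erf t) := by
  have h_exp (s : ℝ) : HasSum (fun n : ℕ => (-1) ^ n * s ^ (2 * n) / n !) (exp (-s ^ 2)) := by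
    have h := NormedSpace.expSeries_div_hasSum_exp (-s ^ 2)
    rw [← exp_eq_exp_ℝ] at h
    exact h.congr_fun fun n => by ring
  have h_int (n : ℕ) : ∫ s in (0 : ℝ)..t, (-1) ^ n * s ^ (2 * n) / n ! =
      (-1) ^ n * t ^ (2 * n + 1) / (n ! * (2 * n + 1)) := by
    simp_rw [mul_div_right_comm _ (_ ^ _), intervalIntegral.integral_const_mul, integral_pow]
    push_cast
    field_simp
    ring
  have h_series : HasSum (fun n : ℕ => ∫ s in (0 : ℝ)..t, (-1) ^ n * s ^ (2 * n) / n !)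
      (∫ s in (0 : ℝ)..t, exp (-s ^ 2)) := by
    refine intervalIntegral.hasSum_integral_of_dominated_convergence
      (fun n _ => |t| ^ (2 * n) / n !) (fun n => by fun_prop) (fun n => ?_) ?_
      intervalIntegrable_const (Eventually.of_forall fun s _ => h_exp s)
    · refine Eventually.of_forall fun s hs => ?_
      rw [norm_div, norm_mul, norm_pow, norm_pow, norm_neg, norm_one, one_pow, one_mul,
        Real.norm_natCast, Real.norm_eq_abs]
      have hst : |s| ≤ |t| := by simpa using abs_sub_left_of_mem_uIcc (uIoc_subset_uIcc hs)
      gcongr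
    · refine Eventually.of_forall fun s _ => ?_
      exact (summable_pow_div_factorial (|t| ^ 2)).congr fun n => by rw [pow_mul]
  simp_rw [erf, ← h_int]
  exact h_series.mul_left (2 / √π)

noncomputable def wrightTerm (x a b : ℝ) (k : ℕ) : ℝ :=
  x ^ k / (k ! * Gamma (a * k + b))

lemma continuous_wrightTerm (x b : ℝ) (k : ℕ) : Continuous fun a => wrightTerm x a b k := by
  simp only [wrightTerm, ← div_div, div_eq_mul_inv _ (Gamma _)]
  exact continuous_const.mul (continuous_inv_Gamma.comp (by fun_prop))

lemma abs_wrightTerm_le {a : ℝ} (ha : a ∈ Icc (-(1 / 2)) (-(1 / 4))) (x : ℝ) (k : ℕ) :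
    |wrightTerm x a 1 k| ≤ max 1 (Gamma (1 / 4)) * (|x| ^ k / √(k ! : ℝ)) := by
  have hk : (0 : ℝ) < k ! := by positivity
  calc |wrightTerm x a 1 k| = |x| ^ k / k ! * |(Gamma (a * k + 1))⁻¹| := by
        rw [wrightTerm, ← div_div, div_eq_mul_inv _ (Gamma _), abs_mul, abs_div, abs_pow,
          abs_of_pos hk]
    _ ≤ |x| ^ k / k ! * (max 1 (Gamma (1 / 4)) * √(k ! : ℝ)) := by
        gcongr; exact abs_inv_Gamma_mul_nat_add_one_le ha k
    _ = max 1 (Gamma (1 / 4)) * (|x| ^ k / √(k ! : ℝ)) := by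
        nth_rw 1 [← mul_self_sqrt hk.le]
        field_simp

theorem continuousWithinAt_wright_neg_half (x : ℝ) :
    ContinuousWithinAt (fun a => wright x a 1) (Ici (-(1 / 2))) (-(1 / 2)) := by
  refine tendsto_tsum_of_dominated_convergence
    ((summable_abs_pow_div_sqrt_factorial x).mul_left (max 1 (Gamma (1 / 4))))
    (fun k => (continuous_wrightTerm x 1 k).continuousWithinAt) ?_
  filter_upwards [Icc_mem_nhdsGE (by norm_num : -(1 / 2 : ℝ) < -(1 / 4))] with a ha k
  exact abs_wrightTerm_le ha x k

lemma hasSum_wrightTerm_neg_half (x : ℝ) :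
    HasSum (wrightTerm (-x) (-(1 / 2)) 1) (1 - erf (x / 2)) := by
  have h_even : HasSum (fun n => wrightTerm (-x) (-(1 / 2)) 1 (2 * n)) 1 := by
    convert hasSum_ite_eq 0 (1 : ℝ) using 1
    ext n
    cases n <;> simp [wrightTerm, Gamma_neg_nat_eq_zero]
  have h_odd : HasSum (fun n => wrightTerm (-x) (-(1 / 2)) 1 (2 * n + 1)) (-erf (x / 2)) := by
    refine (hasSum_erf (x / 2)).neg.congr_fun fun n => ?_
    have h : -(1 / 2 : ℝ) * ((2 * n + 1 : ℕ) : ℝ) + 1 = 1 / 2 - n := by push_cast; ring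
    have h_pow : (x / 2) ^ (2 * n + 1) = x ^ (2 * n + 1) / (4 ^ n * 2) := by
      rw [div_pow, pow_succ (2 : ℝ), pow_mul (2 : ℝ)]
      norm_num
    rw [wrightTerm, h, div_eq_mul_inv, mul_inv, inv_Gamma_half_sub_nat, Odd.neg_pow ⟨n, rfl⟩,
      Nat.factorial_succ, h_pow]
    push_cast
    field_simp
  simpa [sub_eq_add_neg] using h_even.even_add_odd h_odd

theorem wright_neg_neg_half_one (x : ℝ) : wright (-x) (-(1 / 2)) 1 = 1 - erf (x / 2) :=
  (hasSum_wrightTerm_neg_half x).tsum_eq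

theorem wright_tendsto_erf_general (x : ℝ) :
    Tendsto (fun α : ℝ => 1 - wright (-x) (-(α / 2)) 1)
      (nhdsWithin 1 (Set.Ioo 0 1)) (nhds (erf (x / 2))) := by
  have h_param : Tendsto (fun α : ℝ => -(α / 2)) (𝓝[Ioo 0 1] 1) (𝓝[≥] (-(1 / 2))) := by
    refine tendsto_nhdsWithin_iff.mpr ⟨?_, ?_⟩
    · exact ((continuous_id.div_const 2).neg.tendsto' 1 _ (by norm_num)).mono_left
        nhdsWithin_le_nhds
    · filter_upwards [self_mem_nhdsWithin] with α hα
      exact mem_Ici.mpr (by linarith [hα.2])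
  have h := ((continuousWithinAt_wright_neg_half (-x)).tendsto.comp h_param).const_sub 1
  rwa [wright_neg_neg_half_one, sub_sub_cancel] at h

theorem wright_tendsto_erf (x : ℝ) (hx : 0 < x) :
    Tendsto (fun α : ℝ => 1 - wright (-x) (-(α / 2)) 1)
      (nhdsWithin 1 (Set.Ioo 0 1)) (nhds (erf (x / 2))) :=
  wright_tendsto_erf_general x
end

section
/- Let a > −1 and b ∈ ℝ. For every z ∈ ℝ, the function z ↦ W(z,a,b) is differentiable at z with derivative W(z,a,a+b). -/
open Real Filter Set

/-!
The coefficients `1 / (k! Γ(ak + b))` form a power series of infinite radius, so it can be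
differentiated termwise, and `(k + 1) / ((k + 1)! Γ(a(k + 1) + b)) = 1 / (k! Γ(ak + (a + b)))`
identifies the derived series as the Wright series with parameter `a + b`.

For `a ≥ 0` the factor `1 / Γ(ak + b)` is eventually bounded. For `-1 < a < 0` the reflection
formula bounds it by `Γ(|a|k + 1 - b)`, and the log-convexity estimate `Γ(x + α) ≤ Γ(x) xᵅ`
shows that consecutive terms of `Γ(|a|k + 1 - b) rᵏ / k!` have ratio `O(k^(|a| - 1)) → 0`.
-/

open scoped Nat

section PowerSeries

variable {𝕜 : Type*} [RCLike 𝕜] {c : ℕ → 𝕜}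

theorem summable_nat_mul_norm_mul_pow_pred (hc : ∀ r : ℝ, Summable fun n => ‖c n‖ * r ^ n)
    {R : ℝ} (hR : 0 < R) : Summable fun n : ℕ => n * ‖c n‖ * R ^ (n - 1) := by
  refine .of_nonneg_of_le (fun n => by positivity) (fun n => ?_) ((hc (2 * R)).div_const R)
  rcases n with _ | n
  · simpa using by positivity
  · have h2 : ((n + 1 : ℕ) : ℝ) ≤ 2 ^ (n + 1) := by exact_mod_cast (Nat.lt_two_pow_self).le
    rw [le_div_iff₀ hR, mul_pow, Nat.add_sub_cancel]
    calc ((n + 1 : ℕ) : ℝ) * ‖c (n + 1)‖ * R ^ n * R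
        = ((n + 1 : ℕ) : ℝ) * (‖c (n + 1)‖ * R ^ (n + 1)) := by ring
      _ ≤ 2 ^ (n + 1) * (‖c (n + 1)‖ * R ^ (n + 1)) := by gcongr
      _ = _ := by ring

theorem hasDerivAt_tsum_mul_pow (hc : ∀ r : ℝ, Summable fun n => ‖c n‖ * r ^ n) (z : 𝕜) :
    HasDerivAt (fun y => ∑' n, c n * y ^ n) (∑' n, (n + 1) * c (n + 1) * z ^ n) z := by
  set R := ‖z‖ + 1
  have hz : z ∈ Metric.ball (0 : 𝕜) R := by simp [R]
  have hderiv (n : ℕ) (y : 𝕜) : HasDerivAt (fun y => c n * y ^ n) (c n * (n * y ^ (n - 1))) y :=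
    (hasDerivAt_pow n y).const_mul (c n)
  have hbound (n : ℕ) (y : 𝕜) (hy : y ∈ Metric.ball (0 : 𝕜) R) :
      ‖c n * (n * y ^ (n - 1))‖ ≤ n * ‖c n‖ * R ^ (n - 1) := by
    rw [mem_ball_zero_iff] at hy
    rw [norm_mul, norm_mul, norm_pow, RCLike.norm_natCast]
    calc ‖c n‖ * (n * ‖y‖ ^ (n - 1)) ≤ ‖c n‖ * (n * R ^ (n - 1)) := by gcongr
      _ = n * ‖c n‖ * R ^ (n - 1) := by ring
  have hu := summable_nat_mul_norm_mul_pow_pred hc (by positivity : 0 < R)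
  have hsum_z : Summable fun n => c n * z ^ n :=
    .of_norm_bounded (hc ‖z‖) fun n => by rw [norm_mul, norm_pow]
  have hderiv_tsum := hasDerivAt_tsum_of_isPreconnected hu Metric.isOpen_ball
    (convex_ball _ _).isPreconnected (fun n y _ => hderiv n y) hbound hz hsum_z hz
  have hshift : ∑' n, c n * (n * z ^ (n - 1)) = ∑' n, (n + 1) * c (n + 1) * z ^ n := by
    rw [(Summable.of_norm_bounded hu fun n => hbound n z hz).tsum_eq_zero_add]
    simp only [Nat.cast_zero, zero_mul, mul_zero, zero_add, Nat.add_sub_cancel, Nat.cast_add,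
      Nat.cast_one]
    exact tsum_congr fun n => by ring
  exact hshift ▸ hderiv_tsum

end PowerSeries

namespace Real

theorem abs_inv_Gamma_le_Gamma_one_sub {t : ℝ} (ht : t < 1) : |(Gamma t)⁻¹| ≤ Gamma (1 - t) := by
  have hpos : 0 < Gamma (1 - t) := Gamma_pos_of_pos (by linarith)
  rcases eq_or_ne (Gamma t) 0 with h0 | h0
  · simpa [h0] using hpos.le
  have h := Gamma_mul_Gamma_one_sub t
  have hsin : sin (π * t) ≠ 0 := fun hs => mul_ne_zero h0 hpos.ne' (by rwa [hs, div_zero] at h)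
  have hinv : (Gamma t)⁻¹ = Gamma (1 - t) * sin (π * t) / π := by
    rw [eq_div_iff hsin] at h
    rw [eq_div_iff pi_pos.ne']
    nth_rewrite 1 [← h]
    rw [mul_assoc, inv_mul_cancel_left₀ h0]
  rw [hinv, abs_div, abs_mul, abs_of_pos hpos, abs_of_pos pi_pos]
  calc Gamma (1 - t) * |sin (π * t)| / π ≤ Gamma (1 - t) * 1 / 1 := by
        gcongr
        · exact abs_sin_le_one _
        · linarith [pi_gt_three]
    _ = Gamma (1 - t) := by ring

theorem Gamma_add_le_Gamma_mul_rpow {x α : ℝ} (hx : 0 < x) (hα₀ : 0 < α) (hα₁ : α < 1) :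
    Gamma (x + α) ≤ Gamma x * x ^ α := by
  have h := Gamma_mul_add_mul_le_rpow_Gamma_mul_rpow_Gamma hx (by linarith : 0 < x + 1)
    (by linarith : 0 < 1 - α) hα₀ (by ring)
  rw [show (1 - α) * x + α * (x + 1) = x + α by ring, Gamma_add_one hx.ne',
    mul_rpow hx.le (Gamma_pos_of_pos hx).le] at h
  calc Gamma (x + α) ≤ _ := h
    _ = Gamma x ^ (1 - α + α) * x ^ α := by
        rw [rpow_add (Gamma_pos_of_pos hx)]; ring
    _ = Gamma x * x ^ α := by rw [sub_add_cancel, rpow_one]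

theorem summable_Gamma_mul_add_mul_pow_div_factorial {α : ℝ} (hα₀ : 0 < α) (hα₁ : α < 1)
    (c r : ℝ) : Summable fun k : ℕ => Gamma (α * k + c) * r ^ k / k ! := by
  have hn : Tendsto (fun n : ℕ => (n : ℝ)) atTop atTop := tendsto_natCast_atTop_atTop
  have hpos : ∀ᶠ n : ℕ in atTop, 0 < α * n + c :=
    ((hn.const_mul_atTop hα₀).atTop_add tendsto_const_nhds).eventually_gt_atTop 0
  have hle : ∀ᶠ n : ℕ in atTop, α * n + c ≤ n + 1 := by
    filter_upwards [(hn.const_mul_atTop (sub_pos.2 hα₁)).eventually_ge_atTop (c - 1)] with n hn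
    linarith
  have hsmall : ∀ᶠ n : ℕ in atTop, |r| * ((n : ℝ) + 1) ^ (α - 1) ≤ 1 / 2 := by
    have h := ((tendsto_rpow_neg_atTop (sub_pos.2 hα₁)).comp
      (hn.atTop_add (tendsto_const_nhds (x := (1 : ℝ))))).const_mul |r|
    rw [mul_zero, neg_sub] at h
    exact h.eventually (ge_mem_nhds (by norm_num))
  refine summable_of_ratio_norm_eventually_le (r := 1 / 2) (by norm_num) ?_
  filter_upwards [hpos, hle, hsmall] with n hx hxn hr
  set x := α * n + c
  have hnext : α * ((n + 1 : ℕ) : ℝ) + c = x + α := by push_cast; ring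
  have hn1 : (0 : ℝ) < n + 1 := by positivity
  have hΓ : Gamma (x + α) ≤ Gamma x * ((n : ℝ) + 1) ^ α :=
    (Gamma_add_le_Gamma_mul_rpow hx hα₀ hα₁).trans (by gcongr)
  rw [hnext, Nat.factorial_succ]
  simp only [norm_div, norm_mul, norm_pow, Real.norm_natCast, Nat.cast_mul]
  rw [norm_of_nonneg (Gamma_pos_of_pos (by linarith)).le, norm_of_nonneg (Gamma_pos_of_pos hx).le]
  calc Gamma (x + α) * ‖r‖ ^ (n + 1) / (((n + 1 : ℕ) : ℝ) * n !)
      ≤ Gamma x * ((n : ℝ) + 1) ^ α * ‖r‖ ^ (n + 1) / (((n + 1 : ℕ) : ℝ) * n !) := by gcongr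
    _ = (|r| * ((n : ℝ) + 1) ^ (α - 1)) * (Gamma x * ‖r‖ ^ n / n !) := by
        rw [rpow_sub_one hn1.ne', norm_eq_abs]
        push_cast
        field_simp
        ring
    _ ≤ 1 / 2 * (Gamma x * ‖r‖ ^ n / n !) := by gcongr

theorem exists_eventually_abs_inv_Gamma_le {a : ℝ} (ha : 0 ≤ a) (b : ℝ) :
    ∃ C, ∀ᶠ k : ℕ in atTop, |(Gamma (a * k + b))⁻¹| ≤ C := by
  rcases ha.eq_or_lt with rfl | ha
  · exact ⟨_, .of_forall fun k => by rw [zero_mul, zero_add]⟩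
  refine ⟨1, ?_⟩
  filter_upwards [(tendsto_natCast_atTop_atTop.const_mul_atTop ha).eventually_ge_atTop (2 - b)]
    with k hk
  have h2 : (2 : ℝ) ≤ a * k + b := by linarith
  have hΓ : 1 ≤ Gamma (a * k + b) :=
    Gamma_two ▸ Gamma_strictMonoOn_Ici.monotoneOn self_mem_Ici h2 h2
  rw [abs_of_pos (inv_pos.2 (by linarith))]
  exact inv_le_one_of_one_le₀ hΓ

theorem eventually_abs_inv_Gamma_le_Gamma {a : ℝ} (ha : a < 0) (b : ℝ) :
    ∀ᶠ k : ℕ in atTop, |(Gamma (a * k + b))⁻¹| ≤ Gamma (-a * k + (1 - b)) := by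
  filter_upwards [(tendsto_natCast_atTop_atTop.const_mul_atTop (neg_pos.2 ha)).eventually_gt_atTop
    (b - 1)] with k hk
  convert abs_inv_Gamma_le_Gamma_one_sub (t := a * k + b) (by linarith) using 2
  ring

end Real

noncomputable def wrightCoeff (a b : ℝ) (k : ℕ) : ℝ := (k ! * Gamma (a * k + b))⁻¹

theorem wright_eq_tsum_wrightCoeff_mul_pow (x a b : ℝ) :
    wright x a b = ∑' k, wrightCoeff a b k * x ^ k := by
  simp only [wright, wrightCoeff, div_eq_inv_mul]

theorem succ_mul_wrightCoeff_succ (a b : ℝ) (k : ℕ) :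
    (k + 1) * wrightCoeff a b (k + 1) = wrightCoeff a (a + b) k := by
  have hk : (k + 1 : ℝ) ≠ 0 := by positivity
  rw [wrightCoeff, wrightCoeff, Nat.factorial_succ, Nat.cast_mul, Nat.cast_succ, mul_assoc,
    mul_inv, mul_inv_cancel_left₀ hk]
  ring_nf

theorem norm_wrightCoeff (a b : ℝ) (k : ℕ) :
    ‖wrightCoeff a b k‖ = |(Gamma (a * k + b))⁻¹| / k ! := by
  rw [wrightCoeff, norm_eq_abs, mul_inv, abs_mul, abs_inv (k ! : ℝ), Nat.abs_cast, inv_mul_eq_div]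

theorem summable_norm_wrightCoeff_mul_pow {a : ℝ} (ha : -1 < a) (b r : ℝ) :
    Summable fun k => ‖wrightCoeff a b k‖ * r ^ k := by
  suffices ∃ B : ℕ → ℝ, (∀ᶠ k : ℕ in atTop, |(Gamma (a * k + b))⁻¹| ≤ B k) ∧
      Summable fun k : ℕ => B k * |r| ^ k / (k ! : ℝ) by
    obtain ⟨B, hB, hs⟩ := this
    refine .of_norm_bounded_eventually_nat hs ?_
    filter_upwards [hB] with k hk
    rw [norm_mul, norm_norm, norm_wrightCoeff, norm_pow, norm_eq_abs, div_mul_eq_mul_div]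
    gcongr
  rcases le_or_gt 0 a with ha₀ | ha₀
  · obtain ⟨C, hC⟩ := exists_eventually_abs_inv_Gamma_le ha₀ b
    exact ⟨fun _ => C, hC, by simpa only [mul_div_assoc] using
      (Real.summable_pow_div_factorial |r|).mul_left C⟩
  · exact ⟨_, eventually_abs_inv_Gamma_le_Gamma ha₀ b,
      summable_Gamma_mul_add_mul_pow_div_factorial (neg_pos.2 ha₀) (by linarith) (1 - b) |r|⟩

theorem wright_hasDerivAt (a b : ℝ) (ha : -1 < a) (z : ℝ) :
    HasDerivAt (fun y : ℝ => wright y a b) (wright z a (a + b)) z := by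
  simp only [wright_eq_tsum_wrightCoeff_mul_pow, ← succ_mul_wrightCoeff_succ]
  exact hasDerivAt_tsum_mul_pow (summable_norm_wrightCoeff_mul_pow ha b) z
end
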